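/- For real z with |z| < 1, the quotient formula G(1-z)/G(1+z) = e^z (2π)^{-z} · ∏_{n=1}^∞ (1 - z/n)^n (1 + z/n)^{-n} e^{2z} holds. -/

import Mathlib

open Real

/-! The logarithm of the `n`-th Weierstrass factor of `G(1 + w)` is the second-order Taylor
remainder of `(n + 1) log (1 + w / (n + 1))`, hence `O(|w|³ / n²)` for `|w| < 1`. So both products
converge to the exponential of an absolutely convergent series, the quotient of the products is the
product of the termwise quotients, and the prefactors of `G(1 - z)` and `G(1 + z)` combine in the
exponent. -/

/-- `GG z` is the Barnes G-function evaluated at `z + 1`, defined by the Weierstrass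
product. -/
noncomputable def GG (z : ℝ) : ℝ :=
  (2 * π) ^ (z / 2) *
    Real.exp (-(z * (z + 1)) / 2 - Real.eulerMascheroniConstant * z ^ 2 / 2) *
    ∏' n : ℕ, (1 + z / (n + 1)) ^ (n + 1) * Real.exp (-z + z ^ 2 / (2 * (n + 1)))

noncomputable def barnesFactor (w : ℝ) (n : ℕ) : ℝ :=
  (1 + w / (n + 1)) ^ (n + 1) * exp (-w + w ^ 2 / (2 * (n + 1)))

noncomputable def logBarnesFactor (w : ℝ) (n : ℕ) : ℝ :=
  (n + 1) * log (1 + w / (n + 1)) + (-w + w ^ 2 / (2 * (n + 1)))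

lemma exp_logBarnesFactor {w : ℝ} (hw : -1 < w) (n : ℕ) :
    exp (logBarnesFactor w n) = barnesFactor w n := by
  have hbase : 0 < 1 + w / (n + 1) := by
    rw [one_add_div (by positivity)]
    exact div_pos (by linarith [n.cast_nonneg (α := ℝ)]) (by positivity)
  rw [logBarnesFactor, barnesFactor, exp_add, ← log_rpow hbase, exp_log (rpow_pos_of_pos hbase _),
    ← Nat.cast_add_one, rpow_natCast]

lemma abs_logBarnesFactor_le {w : ℝ} (hw : |w| < 1) (n : ℕ) :
    |logBarnesFactor w n| ≤ |w| ^ 3 / (1 - |w|) / ((n : ℝ) + 1) ^ 2 := by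
  obtain ⟨m, hm_def⟩ : ∃ m : ℝ, m = n + 1 := ⟨_, rfl⟩
  have hm : 1 ≤ m := by simp [hm_def]
  have hm0 : 0 < m := by linarith
  have hx : |w| / m ≤ |w| := div_le_self (abs_nonneg w) hm
  have htaylor := abs_log_sub_add_sum_range_le (x := -w / m)
    (by rw [abs_div, abs_neg, abs_of_pos hm0]; linarith) 2
  rw [abs_div, abs_neg, abs_of_pos hm0] at htaylor
  have hL : logBarnesFactor w n =
      m * ((∑ i ∈ Finset.range 2, (-w / m) ^ (i + 1) / (i + 1)) + log (1 - -w / m)) := by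
    rw [show 1 - -w / m = 1 + w / m by ring]
    simp only [logBarnesFactor, ← hm_def]
    norm_num [Finset.sum_range_succ]
    field_simp
    ring
  rw [← hm_def]
  calc |logBarnesFactor w n|
      ≤ m * ((|w| / m) ^ (2 + 1) / (1 - |w| / m)) := by
        rw [hL, abs_mul, abs_of_pos hm0]; gcongr
    _ ≤ m * ((|w| / m) ^ 3 / (1 - |w|)) := by gcongr
    _ = |w| ^ 3 / (1 - |w|) / m ^ 2 := by field_simp

lemma summable_logBarnesFactor {w : ℝ} (hw : |w| < 1) : Summable (logBarnesFactor w) := by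
  refine Summable.of_norm_bounded ?_ (abs_logBarnesFactor_le hw)
  have h : Summable fun n : ℕ => 1 / ((n : ℝ) + 1) ^ 2 := by
    exact_mod_cast (summable_nat_add_iff 1).mpr (Real.summable_one_div_nat_pow.mpr one_lt_two)
  simpa only [mul_one_div] using h.mul_left (|w| ^ 3 / (1 - |w|))

lemma barnesFactor_neg_div (z : ℝ) (n : ℕ) :
    barnesFactor (-z) n / barnesFactor z n =
      (1 - z / (n + 1)) ^ (n + 1) * ((1 + z / (n + 1)) ^ (n + 1))⁻¹ * exp (2 * z) := by
  have hexp : exp (2 * z) = exp (z + z ^ 2 / (2 * (n + 1))) / exp (-z + z ^ 2 / (2 * (n + 1))) := by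
    rw [← exp_sub]; ring_nf
  rw [barnesFactor, barnesFactor, hexp, neg_div, ← sub_eq_add_neg, neg_neg, neg_sq]
  simp only [div_eq_mul_inv, mul_inv]
  ring

lemma hasProd_barnesFactor {w : ℝ} (hw : |w| < 1) :
    HasProd (barnesFactor w) (exp (∑' n, logBarnesFactor w n)) := by
  have hw' : -1 < w := (abs_lt.mp hw).1
  simpa only [Function.comp_def, exp_logBarnesFactor hw'] using
    (summable_logBarnesFactor hw).hasSum.rexp

lemma GG_eq_exp {z : ℝ} (hz : |z| < 1) :
    GG z = exp (z / 2 * log (2 * π) - z * (z + 1) / 2 - eulerMascheroniConstant * z ^ 2 / 2 +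
      ∑' n, logBarnesFactor z n) := by
  have hGG : GG z = (2 * π) ^ (z / 2) *
      exp (-(z * (z + 1)) / 2 - eulerMascheroniConstant * z ^ 2 / 2) * ∏' n, barnesFactor z n :=
    rfl
  rw [hGG, (hasProd_barnesFactor hz).tprod_eq, rpow_def_of_pos (by positivity),
    ← exp_add, ← exp_add]
  ring_nf

/-- For `|z| < 1`,
`G(1-z)/G(1+z) = e^z (2π)^{-z} ∏_{n≥1} (1 - z/n)^n (1 + z/n)^{-n} e^{2z}`. -/
theorem barnesG_quotient_formula (z : ℝ) (hz : |z| < 1) :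
    GG (-z) / GG z =
      Real.exp z * (2 * π) ^ (-z) *
        ∏' n : ℕ, (1 - z / (n + 1)) ^ (n + 1) * ((1 + z / (n + 1)) ^ (n + 1))⁻¹ *
          Real.exp (2 * z) := by
  have hz' : |-z| < 1 := by rwa [abs_neg]
  have hprod := (hasProd_barnesFactor hz').div₀ (hasProd_barnesFactor hz) (exp_ne_zero _)
  simp only [barnesFactor_neg_div] at hprod
  rw [hprod.tprod_eq, GG_eq_exp hz, GG_eq_exp hz', rpow_def_of_pos (by positivity), ← exp_sub,
    ← exp_sub, ← exp_add, ← exp_add]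
  ring_nf
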